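/- Greedy guarantee for monotone submodular maximization: if F : Finset V → ℝ is monotone (F(S) ≤ F(T) for S ⊆ T), submodular (F(S ∪ {v}) − F(S) ≥ F(T ∪ {v}) − F(T) for S ⊆ T, v ∉ T), and F(∅) = 0, then the greedy algorithm selecting m elements (each maximizing the marginal gain) produces a set G with F(G) ≥ (1 − (1 − 1/m)^m)·max_{|S| ≤ m} F(S) ≥ (1 − 1/e)·max_{|S| ≤ m} F(S). -/

import Mathlib

/-!
Let `G k` be the greedy set after `k` steps and `S` any set with `|S| ≤ m`. By monotonicity and
submodularity, `F S - F (G k) ≤ F (G k ∪ S) - F (G k)` is at most the sum of the marginal gains of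
the elements of `S` at `G k`, each of which is at most the greedy gain `F (G (k+1)) - F (G k)`.
So the gap `F S - F (G k)` shrinks by a factor `1 - 1/m` at every step, whence
`F S - F (G m) ≤ (1 - 1/m)^m F S ≤ e⁻¹ F S`.
-/

section Submodular

variable {V : Type*} [DecidableEq V] {F : Finset V → ℝ}
  (hmono : ∀ S T : Finset V, S ⊆ T → F S ≤ F T)
  (hsub : ∀ S T : Finset V, S ⊆ T → ∀ v ∉ T, F (insert v T) - F T ≤ F (insert v S) - F S)
include hmono hsub

theorem sub_le_sum_marginal_gain (T A : Finset V) :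
    F (T ∪ A) - F T ≤ ∑ v ∈ A, (F (insert v T) - F T) := by
  induction A using Finset.induction_on with
  | empty => simp
  | @insert a A ha ih =>
    have hstep : F (insert a (T ∪ A)) - F (T ∪ A) ≤ F (insert a T) - F T := by
      by_cases haTA : a ∈ T ∪ A
      · rw [Finset.insert_eq_self.mpr haTA, sub_self, sub_nonneg]
        exact hmono _ _ (Finset.subset_insert a T)
      · exact hsub T (T ∪ A) Finset.subset_union_left a haTA
    rw [Finset.sum_insert ha, Finset.union_insert]
    linarith

theorem sub_le_mul_greedy_gain {m : ℕ} {S T : Finset V} (hS : S.card ≤ m) {v : V}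
    (hbest : ∀ u : V, F (insert u T) - F T ≤ F (insert v T) - F T) :
    F S - F T ≤ m * (F (insert v T) - F T) := by
  have hgain : 0 ≤ F (insert v T) - F T :=
    sub_nonneg.mpr (hmono _ _ (Finset.subset_insert v T))
  calc F S - F T ≤ F (T ∪ S) - F T := by
        gcongr; exact hmono _ _ Finset.subset_union_right
    _ ≤ ∑ u ∈ S, (F (insert u T) - F T) := sub_le_sum_marginal_gain hmono hsub T S
    _ ≤ S.card • (F (insert v T) - F T) := Finset.sum_le_card_nsmul _ _ _ fun u _ => hbest u
    _ ≤ m * (F (insert v T) - F T) := by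
        rw [nsmul_eq_mul]; gcongr

end Submodular

theorem sub_le_one_sub_inv_pow_mul {a : ℕ → ℝ} {c m : ℝ} (hm : 1 ≤ m) {n : ℕ}
    (hstep : ∀ k < n, c - a k ≤ m * (a (k + 1) - a k)) :
    c - a n ≤ (1 - 1 / m) ^ n * (c - a 0) := by
  induction n with
  | zero => simp
  | succ n ih =>
    have hratio : 0 ≤ 1 - 1 / m := sub_nonneg.mpr ((div_le_one (by linarith)).mpr hm)
    have hcontract : c - a (n + 1) ≤ (1 - 1 / m) * (c - a n) := by
      have := hstep n n.lt_succ_self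
      rw [one_sub_div (by positivity), div_mul_eq_mul_div, le_div_iff₀ (by linarith)]
      linarith
    calc c - a (n + 1) ≤ (1 - 1 / m) * (c - a n) := hcontract
      _ ≤ (1 - 1 / m) * ((1 - 1 / m) ^ n * (c - a 0)) :=
          mul_le_mul_of_nonneg_left (ih fun k hk => hstep k (hk.trans n.lt_succ_self)) hratio
      _ = (1 - 1 / m) ^ (n + 1) * (c - a 0) := by ring

theorem stmt9_general {V : Type*} [DecidableEq V]
    (F : Finset V → ℝ)
    (hmono : ∀ S T : Finset V, S ⊆ T → F S ≤ F T)
    (hsub : ∀ S T : Finset V, S ⊆ T → ∀ v ∉ T,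
      F (insert v T) - F T ≤ F (insert v S) - F S)
    (h0 : F ∅ = 0)
    (m : ℕ) (hm : 0 < m)
    (G : ℕ → Finset V) (hG0 : G 0 = ∅)
    (hgreedy : ∀ k < m, ∃ v : V, G (k + 1) = insert v (G k) ∧
      ∀ u : V, F (insert u (G k)) - F (G k) ≤ F (insert v (G k)) - F (G k)) :
    ∀ S : Finset V, S.card ≤ m →
      (1 - (1 - 1 / (m : ℝ)) ^ m) * F S ≤ F (G m) ∧
      (1 - Real.exp (-1)) * F S ≤ F (G m) := by
  intro S hS
  have hgap : F S - F (G m) ≤ (1 - 1 / (m : ℝ)) ^ m * F S := by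
    have := sub_le_one_sub_inv_pow_mul (a := fun k => F (G k)) (c := F S) (m := m) (n := m)
      (by exact_mod_cast Nat.one_le_of_lt hm) fun k hk => by
        obtain ⟨v, hv, hbest⟩ := hgreedy k hk
        simpa only [hv] using sub_le_mul_greedy_gain hmono hsub hS hbest
    simpa only [hG0, h0, sub_zero] using this
  have hFS : 0 ≤ F S := h0 ▸ hmono ∅ S S.empty_subset
  have hexp : (1 - 1 / (m : ℝ)) ^ m ≤ Real.exp (-1) :=
    Real.one_sub_div_pow_le_exp_neg (by exact_mod_cast hm)
  constructor <;> nlinarith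

/-- Greedy guarantee for monotone submodular maximization.
If `F` is monotone, submodular, `F ∅ = 0`, and `G` is a greedy sequence
(starting from `∅`, each step inserting an element maximizing the marginal
gain), then for every set `S` with `|S| ≤ m`,
`F (G m) ≥ (1 − (1 − 1/m)^m)·F S ≥ (1 − 1/e)·F S`. -/
theorem stmt9 {V : Type*} [Fintype V] [DecidableEq V]
    (F : Finset V → ℝ)
    (hmono : ∀ S T : Finset V, S ⊆ T → F S ≤ F T)
    (hsub : ∀ S T : Finset V, S ⊆ T → ∀ v ∉ T,
      F (insert v T) - F T ≤ F (insert v S) - F S)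
    (h0 : F ∅ = 0)
    (m : ℕ) (hm : 0 < m)
    (G : ℕ → Finset V) (hG0 : G 0 = ∅)
    (hgreedy : ∀ k < m, ∃ v : V, G (k + 1) = insert v (G k) ∧
      ∀ u : V, F (insert u (G k)) - F (G k) ≤ F (insert v (G k)) - F (G k)) :
    ∀ S : Finset V, S.card ≤ m →
      (1 - (1 - 1 / (m : ℝ)) ^ m) * F S ≤ F (G m) ∧
      (1 - Real.exp (-1)) * F S ≤ F (G m) :=
  stmt9_general F hmono hsub h0 m hm G hG0 hgreedy
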